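/- Let 𝓜 be a quantum channel on M_d(ℂ) such that there exists a positive semidefinite κ with Tr(κ) > 0 and κ ≤ 𝓜(|ξ⟩⟨ξ|) for all unit vectors ξ. Then 𝓜 has a unique fixed density matrix ρ*, and for every density matrix ρ, 𝓜ⁿ(ρ) → ρ* as n → ∞, with ‖𝓜ⁿ(ρ) − ρ*‖₁ ≤ 2(1 − Tr(κ))ⁿ. -/

import Mathlib

open Matrix BigOperators Filter ComplexOrder

/-- The square root `Matrix.PosSemidef.sqrt` of the older Mathlib, spelled out
(it has been removed from Mathlib). -/
noncomputable def Matrix.IsHermitian.psdSqrtOld {d : ℕ} {A : Matrix (Fin d) (Fin d) ℂ}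
    (hA : A.IsHermitian) : Matrix (Fin d) (Fin d) ℂ :=
  (hA.eigenvectorUnitary : Matrix (Fin d) (Fin d) ℂ) *
    diagonal ((↑) ∘ (√·) ∘ hA.eigenvalues) * (star hA.eigenvectorUnitary : Matrix (Fin d) (Fin d) ℂ)

/-- Trace norm: `Tr √(aᴴa)`, the sum of singular values. -/
noncomputable def traceNorm {d : ℕ} (a : Matrix (Fin d) (Fin d) ℂ) : ℝ :=
  ((Matrix.posSemidef_conjTranspose_mul_self a).isHermitian.psdSqrtOld.trace).re

/-- Absolute value `√(bᴴb)` of a matrix. -/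
noncomputable def matAbs {d : ℕ} (b : Matrix (Fin d) (Fin d) ℂ) : Matrix (Fin d) (Fin d) ℂ :=
  (Matrix.posSemidef_conjTranspose_mul_self b).isHermitian.psdSqrtOld

/-- Positive part `b₊ = (|b| + b)/2` (for `b` self-adjoint). -/
noncomputable def matPosPart {d : ℕ} (b : Matrix (Fin d) (Fin d) ℂ) : Matrix (Fin d) (Fin d) ℂ :=
  (1/2 : ℂ) • (matAbs b + b)

/-- Negative part `b₋ = (|b| - b)/2` (for `b` self-adjoint). -/
noncomputable def matNegPart {d : ℕ} (b : Matrix (Fin d) (Fin d) ℂ) : Matrix (Fin d) (Fin d) ℂ :=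
  (1/2 : ℂ) • (matAbs b - b)

/-- Real part `(a + aᴴ)/2` of a matrix. -/
noncomputable def reM {d : ℕ} (a : Matrix (Fin d) (Fin d) ℂ) : Matrix (Fin d) (Fin d) ℂ :=
  (1/2 : ℂ) • (a + aᴴ)

/-- Imaginary part `(a - aᴴ)/(2i)` of a matrix. -/
noncomputable def imM {d : ℕ} (a : Matrix (Fin d) (Fin d) ℂ) : Matrix (Fin d) (Fin d) ℂ :=
  (-(Complex.I)/2) • (a - aᴴ)

/-- A density matrix: positive semidefinite with trace 1. -/
def IsDensity {d : ℕ} (ρ : Matrix (Fin d) (Fin d) ℂ) : Prop :=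
  ρ.PosSemidef ∧ ρ.trace = 1

/-- Trace preservation for a linear map on matrices. -/
def IsTracePreserving {d : ℕ}
    (𝓜 : Matrix (Fin d) (Fin d) ℂ →ₗ[ℂ] Matrix (Fin d) (Fin d) ℂ) : Prop :=
  ∀ a, (𝓜 a).trace = a.trace

/-- Complete positivity: all the ampliations `𝓜 ⊗ id_k` preserve positive semidefiniteness. -/
def IsCompletelyPositive {d : ℕ}
    (𝓜 : Matrix (Fin d) (Fin d) ℂ →ₗ[ℂ] Matrix (Fin d) (Fin d) ℂ) : Prop :=
  ∀ (k : ℕ) (M : Matrix (Fin d × Fin k) (Fin d × Fin k) ℂ), M.PosSemidef →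
    (Matrix.of fun (p q : Fin d × Fin k) =>
      𝓜 (Matrix.of fun a b => M (a, p.2) (b, q.2)) p.1 q.1).PosSemidef

/-- The rank-one projection `|ξ⟩⟨ξ|`. -/
noncomputable def proj {d : ℕ} (ξ : Fin d → ℂ) : Matrix (Fin d) (Fin d) ℂ :=
  Matrix.vecMulVec ξ (star ξ)

/-- The TV-norm `Tr (Re a)₊ + Tr (Re a)₋ + Tr (Im a)₊ + Tr (Im a)₋`. -/
noncomputable def tvNorm {d : ℕ} (a : Matrix (Fin d) (Fin d) ℂ) : ℝ :=
  ((matPosPart (reM a)).trace).re + ((matNegPart (reM a)).trace).re +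
    ((matPosPart (imM a)).trace).re + ((matNegPart (imM a)).trace).re

/-- The completely depolarizing channel `Ω(a) = (Tr a / d) • I`. -/
noncomputable def depol (d : ℕ) : Matrix (Fin d) (Fin d) ℂ →ₗ[ℂ] Matrix (Fin d) (Fin d) ℂ where
  toFun a := (a.trace / d) • (1 : Matrix (Fin d) (Fin d) ℂ)
  map_add' a b := by simp [Matrix.trace_add, add_div, add_smul]
  map_smul' c a := by simp [Matrix.trace_smul, smul_smul, mul_div_assoc]


variable {d : ℕ}

noncomputable def conjD (U : Matrix (Fin d) (Fin d) ℂ) (v : Fin d → ℝ) :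
    Matrix (Fin d) (Fin d) ℂ :=
  U * Matrix.diagonal (fun i => (v i : ℂ)) * Uᴴ

variable {U : Matrix (Fin d) (Fin d) ℂ}

lemma diagR_herm (v : Fin d → ℝ) :
    (Matrix.diagonal (fun i => (v i : ℂ))).IsHermitian :=
  Matrix.isHermitian_diagonal_of_self_adjoint _ (by ext i; simp [Pi.star_apply, Complex.conj_ofReal])

lemma unitary_star_mul (hU : U ∈ Matrix.unitaryGroup (Fin d) ℂ) : Uᴴ * U = 1 := by
  simpa [Matrix.star_eq_conjTranspose] using Matrix.mem_unitaryGroup_iff'.mp hU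

lemma unitary_mul_star (hU : U ∈ Matrix.unitaryGroup (Fin d) ℂ) : U * Uᴴ = 1 := by
  simpa [Matrix.star_eq_conjTranspose] using Matrix.mem_unitaryGroup_iff.mp hU

lemma conjD_herm (v : Fin d → ℝ) : (conjD U v).IsHermitian :=
  Matrix.isHermitian_mul_mul_conjTranspose U (diagR_herm v)

lemma conjD_psd (v : Fin d → ℝ) (hv : ∀ i, 0 ≤ v i) : (conjD U v).PosSemidef :=
  (Matrix.posSemidef_diagonal_iff.mpr fun i =>
    Complex.zero_le_real.mpr (hv i)).mul_mul_conjTranspose_same U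

lemma conjD_trace (hU : U ∈ Matrix.unitaryGroup (Fin d) ℂ) (v : Fin d → ℝ) :
    (conjD U v).trace = ((∑ i, v i : ℝ) : ℂ) := by
  unfold conjD
  rw [Matrix.trace_mul_cycle, unitary_star_mul hU, Matrix.one_mul,
    Matrix.trace_diagonal]
  push_cast; ring

lemma conjD_mul (hU : U ∈ Matrix.unitaryGroup (Fin d) ℂ) (v w : Fin d → ℝ) :
    conjD U v * conjD U w = conjD U (fun i => v i * w i) := by
  unfold conjD
  simp only [Matrix.mul_assoc]
  rw [← Matrix.mul_assoc Uᴴ U, unitary_star_mul hU, Matrix.one_mul,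
    ← Matrix.mul_assoc (Matrix.diagonal _), diagonal_mul_diagonal]
  push_cast; rfl

lemma conjD_add (v w : Fin d → ℝ) : conjD U v + conjD U w = conjD U (fun i => v i + w i) := by
  unfold conjD
  rw [← Matrix.add_mul, ← Matrix.mul_add, diagonal_add]
  push_cast; rfl

lemma conjD_sub (v w : Fin d → ℝ) : conjD U v - conjD U w = conjD U (fun i => v i - w i) := by
  unfold conjD
  rw [← Matrix.sub_mul, ← Matrix.mul_sub, diagonal_sub]
  push_cast; rfl

lemma conjD_smul (c : ℝ) (v : Fin d → ℝ) :
    (c : ℂ) • conjD U v = conjD U (fun i => c * v i) := by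
  unfold conjD
  have : ((c:ℂ) • fun i => ((v i : ℝ) : ℂ)) = fun i => ((c * v i : ℝ) : ℂ) := by
    funext i; push_cast; simp [Pi.smul_apply, smul_eq_mul]
  rw [← Matrix.smul_mul, ← Matrix.mul_smul, ← diagonal_smul, this]

open scoped MatrixOrder in
lemma psdSqrtOld_eq {A : Matrix (Fin d) (Fin d) ℂ} (hA : A.PosSemidef) (hH : A.IsHermitian) :
    hH.psdSqrtOld = CFC.sqrt A := by
  rw [CFC.sqrt_eq_cfc, cfc_nnreal_eq_real _ A, hA.1.cfc_eq, Matrix.IsHermitian.cfc,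
    Matrix.IsHermitian.psdSqrtOld, Unitary.conjStarAlgAut_apply]
  congr 3
  funext i
  simp [Real.coe_toNNReal', max_eq_left (hA.eigenvalues_nonneg i)]

open scoped MatrixOrder in
lemma matAbs_conjD (hU : U ∈ Matrix.unitaryGroup (Fin d) ℂ) (v : Fin d → ℝ) :
    matAbs (conjD U v) = conjD U (fun i => |v i|) := by
  unfold matAbs
  rw [psdSqrtOld_eq (Matrix.posSemidef_conjTranspose_mul_self _)]
  refine CFC.sqrt_unique ?_ (conjD_psd _ (fun i => abs_nonneg (v i))).nonneg
  rw [conjD_mul hU, (conjD_herm (U := U) v).eq, conjD_mul hU]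
  simp [abs_mul_abs_self]

lemma traceNorm_eq_matAbs (a : Matrix (Fin d) (Fin d) ℂ) :
    traceNorm a = ((matAbs a).trace).re := rfl

variable {h : Matrix (Fin d) (Fin d) ℂ}

lemma spectral_conjD (hh : h.IsHermitian) :
    h = conjD (hh.eigenvectorUnitary : Matrix (Fin d) (Fin d) ℂ) hh.eigenvalues := by
  simpa [conjD, Matrix.star_eq_conjTranspose, Function.comp_def] using hh.spectral_theorem

lemma eigU_mem (hh : h.IsHermitian) :
    (hh.eigenvectorUnitary : Matrix (Fin d) (Fin d) ℂ) ∈ Matrix.unitaryGroup (Fin d) ℂ :=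
  hh.eigenvectorUnitary.2

lemma herm_ex (hh : h.IsHermitian) : ∃ U v, U ∈ Matrix.unitaryGroup (Fin d) ℂ ∧ h = conjD U v :=
  ⟨_, _, eigU_mem hh, spectral_conjD hh⟩

lemma psd_ex {ρ : Matrix (Fin d) (Fin d) ℂ} (hρ : ρ.PosSemidef) :
    ∃ U v, U ∈ Matrix.unitaryGroup (Fin d) ℂ ∧ (∀ i, 0 ≤ v i) ∧ ρ = conjD U v :=
  ⟨_, _, eigU_mem hρ.1, fun i => hρ.eigenvalues_nonneg i, spectral_conjD hρ.1⟩

lemma half_add_abs (x : ℝ) : (1/2) * (|x| + x) = max x 0 := by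
  rcases le_total 0 x with hx | hx
  · rw [abs_of_nonneg hx, max_eq_left hx]; ring
  · rw [abs_of_nonpos hx, max_eq_right hx]; ring

lemma half_sub_abs (x : ℝ) : (1/2) * (|x| - x) = max (-x) 0 := by
  rcases le_total 0 x with hx | hx
  · rw [abs_of_nonneg hx, max_eq_right (by linarith)]; ring
  · rw [abs_of_nonpos hx, max_eq_left (by linarith)]; ring

lemma matPosPart_conjD (hU : U ∈ Matrix.unitaryGroup (Fin d) ℂ) (v : Fin d → ℝ) :
    matPosPart (conjD U v) = conjD U (fun i => max (v i) 0) := by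
  unfold matPosPart
  rw [matAbs_conjD hU, conjD_add, show (1/2 : ℂ) = ((1/2 : ℝ) : ℂ) by norm_num, conjD_smul]
  exact congrArg (conjD U) (funext fun i => half_add_abs _)

lemma matNegPart_conjD (hU : U ∈ Matrix.unitaryGroup (Fin d) ℂ) (v : Fin d → ℝ) :
    matNegPart (conjD U v) = conjD U (fun i => max (-v i) 0) := by
  unfold matNegPart
  rw [matAbs_conjD hU, conjD_sub, show (1/2 : ℂ) = ((1/2 : ℝ) : ℂ) by norm_num, conjD_smul]
  exact congrArg (conjD U) (funext fun i => half_sub_abs _)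

lemma traceNorm_conjD (hU : U ∈ Matrix.unitaryGroup (Fin d) ℂ) (v : Fin d → ℝ) :
    traceNorm (conjD U v) = ∑ i, |v i| := by
  rw [traceNorm_eq_matAbs, matAbs_conjD hU, conjD_trace hU, Complex.ofReal_re]

lemma matPosPart_psd (hh : h.IsHermitian) : (matPosPart h).PosSemidef := by
  obtain ⟨U, v, hU, e⟩ := herm_ex hh
  rw [e, matPosPart_conjD hU]
  exact conjD_psd _ (fun i => le_max_right _ _)

lemma matNegPart_psd (hh : h.IsHermitian) : (matNegPart h).PosSemidef := by
  obtain ⟨U, v, hU, e⟩ := herm_ex hh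
  rw [e, matNegPart_conjD hU]
  exact conjD_psd _ (fun i => le_max_right _ _)

lemma traceNorm_nonneg (hh : h.IsHermitian) : 0 ≤ traceNorm h := by
  obtain ⟨U, v, hU, e⟩ := herm_ex hh
  rw [e, traceNorm_conjD hU]
  exact Finset.sum_nonneg fun i _ => abs_nonneg _

lemma conjD_eq_zero (hU : U ∈ Matrix.unitaryGroup (Fin d) ℂ) {v : Fin d → ℝ}
    (hv : ∀ i, v i = 0) : conjD U v = 0 := by
  unfold conjD
  have : (Matrix.diagonal fun i => ((v i : ℝ) : ℂ)) = 0 := by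
    ext i j
    by_cases hij : i = j <;> simp [Matrix.diagonal, hij, hv]
  rw [this, Matrix.mul_zero, Matrix.zero_mul]

lemma traceNorm_eq_zero (hh : h.IsHermitian) (h0 : traceNorm h = 0) : h = 0 := by
  obtain ⟨U, v, hU, e⟩ := herm_ex hh
  rw [e, traceNorm_conjD hU] at h0
  rw [e]
  refine conjD_eq_zero hU fun i => abs_eq_zero.mp ?_
  exact (Finset.sum_eq_zero_iff_of_nonneg (fun i _ => abs_nonneg _)).mp h0 i (Finset.mem_univ i)

lemma traceNorm_split (hh : h.IsHermitian) :
    traceNorm h = ((matPosPart h).trace).re + ((matNegPart h).trace).re := by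
  obtain ⟨U, v, hU, e⟩ := herm_ex hh
  rw [e, traceNorm_conjD hU, matPosPart_conjD hU, matNegPart_conjD hU,
    conjD_trace hU, conjD_trace hU, Complex.ofReal_re, Complex.ofReal_re,
    ← Finset.sum_add_distrib]
  congr 1
  funext i
  rcases le_total 0 (v i) with hx | hx
  · rw [abs_of_nonneg hx, max_eq_left hx, max_eq_right (by linarith)]; ring
  · rw [abs_of_nonpos hx, max_eq_right hx, max_eq_left (by linarith)]; ring

lemma matPos_sub_matNeg (b : Matrix (Fin d) (Fin d) ℂ) : matPosPart b - matNegPart b = b := by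
  unfold matPosPart matNegPart
  rw [← smul_sub]
  have : matAbs b + b - (matAbs b - b) = (2 : ℂ) • b := by
    rw [two_smul]; abel
  rw [this, smul_smul]
  norm_num

lemma hermTrace_real (hh : h.IsHermitian) : h.trace = ((h.trace).re : ℂ) := by
  have : star h.trace = h.trace := by
    rw [← Matrix.trace_conjTranspose, hh.eq]
  exact (Complex.conj_eq_iff_re.mp this).symm

lemma psd_diag_re_nonneg {A : Matrix (Fin d) (Fin d) ℂ} (hA : A.PosSemidef) (i : Fin d) :
    0 ≤ (A i i).re := by
  simpa using (Complex.le_def.mp hA.diag_nonneg).1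

lemma trace_re_sum (A : Matrix (Fin d) (Fin d) ℂ) : (A.trace).re = ∑ i, (A i i).re := by
  rw [Matrix.trace]
  exact Complex.re_sum _ _

lemma psd_trace_re_nonneg {A : Matrix (Fin d) (Fin d) ℂ} (hA : A.PosSemidef) :
    0 ≤ (A.trace).re := by
  rw [trace_re_sum]
  exact Finset.sum_nonneg fun i _ => psd_diag_re_nonneg hA i

lemma conjD_conj (hU : U ∈ Matrix.unitaryGroup (Fin d) ℂ) (v : Fin d → ℝ) :
    Uᴴ * conjD U v * U = Matrix.diagonal (fun i => (v i : ℂ)) := by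
  unfold conjD
  simp only [Matrix.mul_assoc]
  rw [← Matrix.mul_assoc Uᴴ U, unitary_star_mul hU, Matrix.one_mul, Matrix.mul_one]

lemma trace_conj_unitary (hU : U ∈ Matrix.unitaryGroup (Fin d) ℂ)
    (A : Matrix (Fin d) (Fin d) ℂ) : (Uᴴ * A * U).trace = A.trace := by
  rw [Matrix.trace_mul_cycle, unitary_mul_star hU, Matrix.one_mul]

/-- Key inequality: `Tr (A - B)₊ ≤ Tr A` for psd `A`, `B`. -/
lemma posPart_trace_le {A B : Matrix (Fin d) (Fin d) ℂ} (hA : A.PosSemidef)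
    (hB : B.PosSemidef) : ((matPosPart (A - B)).trace).re ≤ (A.trace).re := by
  obtain ⟨U, v, hU, e⟩ := herm_ex (hA.1.sub hB.1)
  have hDA : (Uᴴ * A * U).PosSemidef := hA.conjTranspose_mul_mul_same U
  have hDB : (Uᴴ * B * U).PosSemidef := hB.conjTranspose_mul_mul_same U
  have hsplit : ∀ i, v i = ((Uᴴ * A * U) i i).re - ((Uᴴ * B * U) i i).re := by
    intro i
    have : Uᴴ * (A - B) * U = Matrix.diagonal (fun i => (v i : ℂ)) := by
      rw [e] at *
      exact conjD_conj hU v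
    have h2 : (Uᴴ * (A - B) * U) i i = (v i : ℂ) := by rw [this]; simp
    have h3 : Uᴴ * (A - B) * U = Uᴴ * A * U - Uᴴ * B * U := by
      rw [Matrix.mul_sub, Matrix.sub_mul]
    rw [h3] at h2
    have := congrArg Complex.re h2
    simpa using this.symm
  rw [e, matPosPart_conjD hU, conjD_trace hU, Complex.ofReal_re]
  calc ∑ i, max (v i) 0 ≤ ∑ i, ((Uᴴ * A * U) i i).re := by
        refine Finset.sum_le_sum fun i _ => ?_
        refine max_le ?_ (psd_diag_re_nonneg hDA i)
        rw [hsplit i]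
        have := psd_diag_re_nonneg hDB i
        linarith
    _ = ((Uᴴ * A * U).trace).re := (trace_re_sum _).symm
    _ = (A.trace).re := by rw [trace_conj_unitary hU]

lemma matAbs_neg (b : Matrix (Fin d) (Fin d) ℂ) : matAbs (-b) = matAbs b := by
  unfold matAbs
  rw [psdSqrtOld_eq (Matrix.posSemidef_conjTranspose_mul_self _),
    psdSqrtOld_eq (Matrix.posSemidef_conjTranspose_mul_self _)]
  simp

lemma matNegPart_eq_posPart_neg (b : Matrix (Fin d) (Fin d) ℂ) :
    matNegPart b = matPosPart (-b) := by
  unfold matNegPart matPosPart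
  rw [matAbs_neg, sub_eq_add_neg]

/-- `‖A - B‖₁ ≤ Tr A + Tr B` for psd `A`, `B`. -/
lemma traceNorm_sub_le {A B : Matrix (Fin d) (Fin d) ℂ} (hA : A.PosSemidef)
    (hB : B.PosSemidef) : traceNorm (A - B) ≤ (A.trace).re + (B.trace).re := by
  rw [traceNorm_split (hA.1.sub hB.1)]
  have h1 := posPart_trace_le hA hB
  have h2 : ((matNegPart (A - B)).trace).re ≤ (B.trace).re := by
    rw [matNegPart_eq_posPart_neg, neg_sub]
    exact posPart_trace_le hB hA
  linarith

lemma unitary_entry_abs_le (hU : U ∈ Matrix.unitaryGroup (Fin d) ℂ) (i l : Fin d) :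
    ‖U i l‖ ≤ 1 := by
  have h1 : (U * Uᴴ) i i = 1 := by rw [unitary_mul_star hU]; simp
  have h2 : ∑ k, Complex.normSq (U i k) = 1 := by
    have : (U * Uᴴ) i i = ∑ k, (Complex.normSq (U i k) : ℂ) := by
      simp [Matrix.mul_apply, Matrix.conjTranspose_apply, Complex.mul_conj]
    rw [this] at h1
    exact_mod_cast h1
  have h3 : Complex.normSq (U i l) ≤ 1 := by
    rw [← h2]
    exact Finset.single_le_sum (fun k _ => Complex.normSq_nonneg _) (Finset.mem_univ l)
  rw [Complex.norm_def]
  exact Real.sqrt_le_one.mpr h3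

lemma entry_le_traceNorm (hh : h.IsHermitian) (i j : Fin d) :
    ‖h i j‖ ≤ traceNorm h := by
  obtain ⟨U, v, hU, e⟩ := herm_ex hh
  rw [e, traceNorm_conjD hU]
  have he : conjD U v i j = ∑ l, U i l * (v l : ℂ) * (starRingEnd ℂ) (U j l) := by
    unfold conjD
    rw [Matrix.mul_apply]
    refine Finset.sum_congr rfl fun l _ => ?_
    rw [Matrix.mul_diagonal, Matrix.conjTranspose_apply]
    rfl
  rw [he]
  calc ‖∑ l, U i l * (v l : ℂ) * (starRingEnd ℂ) (U j l)‖
      ≤ ∑ l, ‖U i l * (v l : ℂ) * (starRingEnd ℂ) (U j l)‖ :=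
        norm_sum_le _ _
    _ ≤ ∑ l, |v l| := by
        refine Finset.sum_le_sum fun l _ => ?_
        rw [norm_mul, norm_mul, Complex.norm_conj, Complex.norm_real, Real.norm_eq_abs]
        calc ‖U i l‖ * |v l| * ‖U j l‖
            ≤ 1 * |v l| * 1 := by
              gcongr
              · exact unitary_entry_abs_le hU i l
              · exact unitary_entry_abs_le hU j l
          _ = |v l| := by ring

lemma psd_smul_real {A : Matrix (Fin d) (Fin d) ℂ} (hA : A.PosSemidef) {r : ℝ} (hr : 0 ≤ r) :
    ((r : ℂ) • A).PosSemidef := by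
  constructor
  · unfold Matrix.IsHermitian
    rw [Matrix.conjTranspose_smul, hA.1.eq]
    congr 1
    simp [Complex.conj_ofReal]
  · exact (hA.smul (Complex.zero_le_real.mpr hr)).2

lemma psd_sum {ι : Type*} (s : Finset ι) (f : ι → Matrix (Fin d) (Fin d) ℂ)
    (hf : ∀ i ∈ s, (f i).PosSemidef) : (∑ i ∈ s, f i).PosSemidef := by
  classical
  refine Finset.sum_induction f _ (fun a b ha hb => ha.add hb) ?_ hf
  exact Matrix.PosSemidef.zero

variable {𝓜 : Matrix (Fin d) (Fin d) ℂ →ₗ[ℂ] Matrix (Fin d) (Fin d) ℂ}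

lemma cp_psd (hCP : IsCompletelyPositive 𝓜) {ρ : Matrix (Fin d) (Fin d) ℂ}
    (hρ : ρ.PosSemidef) : (𝓜 ρ).PosSemidef := by
  have hM : (ρ.submatrix (Prod.fst : Fin d × Fin 1 → Fin d) Prod.fst).PosSemidef :=
    hρ.submatrix _
  have key := hCP 1 _ hM
  have heq : (Matrix.of fun (p q : Fin d × Fin 1) =>
      𝓜 (Matrix.of fun a b => (ρ.submatrix Prod.fst Prod.fst) (a, p.2) (b, q.2)) p.1 q.1)
      = (Matrix.of fun (p q : Fin d × Fin 1) => 𝓜 ρ p.1 q.1) := by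
    rfl
  rw [heq] at key
  have hfin : 𝓜 ρ = ((Matrix.of fun (p q : Fin d × Fin 1) => 𝓜 ρ p.1 q.1).submatrix
      (fun i => ((i, 0) : Fin d × Fin 1)) (fun i => ((i, 0) : Fin d × Fin 1))) := by
    ext i j
    simp
  rw [hfin]
  exact key.submatrix _

lemma conjD_eq_sum_proj (v : Fin d → ℝ) :
    conjD U v = ∑ i, ((v i : ℂ)) • proj (fun k => U k i) := by
  ext p q
  rw [Matrix.sum_apply]
  simp only [Matrix.smul_apply, proj, Matrix.vecMulVec_apply, smul_eq_mul, Pi.star_apply]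
  unfold conjD
  rw [Matrix.mul_apply]
  refine Finset.sum_congr rfl fun l _ => ?_
  rw [Matrix.mul_diagonal, Matrix.conjTranspose_apply]
  simp only [RCLike.star_def]
  ring

lemma unit_col (hU : U ∈ Matrix.unitaryGroup (Fin d) ℂ) (i : Fin d) :
    star (fun k => U k i) ⬝ᵥ (fun k => U k i) = 1 := by
  have h1 := congrFun (congrFun (unitary_star_mul hU) i) i
  have h2 : (Uᴴ * U) i i = star (fun k => U k i) ⬝ᵥ (fun k => U k i) := by
    rw [Matrix.mul_apply]
    simp [dotProduct, Matrix.conjTranspose_apply]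
  rw [h2] at h1
  rw [h1]
  simp [Matrix.one_apply]

lemma dom_psd {κ : Matrix (Fin d) (Fin d) ℂ}
    (hdom : ∀ ξ : Fin d → ℂ, star ξ ⬝ᵥ ξ = 1 → (𝓜 (proj ξ) - κ).PosSemidef)
    {ρ : Matrix (Fin d) (Fin d) ℂ} (hρ : ρ.PosSemidef) :
    (𝓜 ρ - ρ.trace • κ).PosSemidef := by
  obtain ⟨U, v, hU, hv, e⟩ := psd_ex hρ
  have e2 : 𝓜 ρ = ∑ i, (v i : ℂ) • 𝓜 (proj (fun k => U k i)) := by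
    rw [e, conjD_eq_sum_proj, map_sum]
    simp only [_root_.map_smul]
  have e3 : ρ.trace • κ = ∑ i, (v i : ℂ) • κ := by
    rw [e, conjD_trace hU, ← Finset.sum_smul]
    congr 1
    push_cast
    rfl
  rw [e2, e3, ← Finset.sum_sub_distrib]
  refine psd_sum _ _ fun i _ => ?_
  rw [← smul_sub]
  exact psd_smul_real (hdom _ (unit_col hU i)) (hv i)

lemma map_herm (hCP : IsCompletelyPositive 𝓜) (hh : h.IsHermitian) : (𝓜 h).IsHermitian := by
  have : 𝓜 h = 𝓜 (matPosPart h) - 𝓜 (matNegPart h) := by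
    rw [← map_sub, matPos_sub_matNeg]
  rw [this]
  exact ((cp_psd hCP (matPosPart_psd hh)).1).sub ((cp_psd hCP (matNegPart_psd hh)).1)

lemma contraction {κ : Matrix (Fin d) (Fin d) ℂ} (hκ : κ.PosSemidef)
    (hTP : IsTracePreserving 𝓜)
    (hdom : ∀ ξ : Fin d → ℂ, star ξ ⬝ᵥ ξ = 1 → (𝓜 (proj ξ) - κ).PosSemidef)
    (hh : h.IsHermitian) (ht : h.trace = 0) :
    traceNorm (𝓜 h) ≤ (1 - (κ.trace).re) * traceNorm h := by
  obtain ⟨P, Q, hp, hq, hpq, hTN⟩ : ∃ P Q, P.PosSemidef ∧ Q.PosSemidef ∧ P - Q = h ∧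
      traceNorm h = (P.trace).re + (Q.trace).re :=
    ⟨_, _, matPosPart_psd hh, matNegPart_psd hh, matPos_sub_matNeg h, traceNorm_split hh⟩
  have htrQP : Q.trace = P.trace := by
    have h0 : (P - Q).trace = 0 := by rw [hpq, ht]
    rw [Matrix.trace_sub, sub_eq_zero] at h0
    exact h0.symm
  have hptr : P.trace = (((P.trace).re : ℝ) : ℂ) := hermTrace_real hp.1
  have hκtr : κ.trace = (((κ.trace).re : ℝ) : ℂ) := hermTrace_real hκ.1
  have hA := dom_psd hdom hp
  have hB := dom_psd hdom hq
  have hAB : (𝓜 P - P.trace • κ) - (𝓜 Q - Q.trace • κ) = 𝓜 h := by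
    rw [htrQP, ← hpq, map_sub]
    abel
  have hbound := traceNorm_sub_le hA hB
  rw [hAB] at hbound
  have htrace : ∀ R : Matrix (Fin d) (Fin d) ℂ, R.trace = P.trace →
      ((𝓜 R - R.trace • κ).trace).re = (P.trace).re * (1 - (κ.trace).re) := by
    intro R hR
    rw [Matrix.trace_sub, Matrix.trace_smul, hTP, hR, smul_eq_mul]
    rw [hptr, hκtr]
    push_cast
    simp [Complex.sub_re, Complex.mul_re]
    ring
  rw [htrace P rfl, htrace Q htrQP] at hbound
  have hQre : (Q.trace).re = (P.trace).re := by rw [htrQP]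
  rw [hTN, hQre]
  calc traceNorm (𝓜 h)
      ≤ (P.trace).re * (1 - (κ.trace).re) + (P.trace).re * (1 - (κ.trace).re) := hbound
    _ = (1 - (κ.trace).re) * ((P.trace).re + (P.trace).re) := by ring

lemma pow_apply_succ (n : ℕ) (a : Matrix (Fin d) (Fin d) ℂ) :
    (𝓜 ^ (n + 1)) a = 𝓜 ((𝓜 ^ n) a) := by
  rw [pow_succ']
  rfl

lemma iter_herm_bound {κ : Matrix (Fin d) (Fin d) ℂ} (hκ : κ.PosSemidef)
    (hCP : IsCompletelyPositive 𝓜) (hTP : IsTracePreserving 𝓜)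
    (hdom : ∀ ξ : Fin d → ℂ, star ξ ⬝ᵥ ξ = 1 → (𝓜 (proj ξ) - κ).PosSemidef)
    (hc0 : 0 ≤ 1 - (κ.trace).re)
    (hh : h.IsHermitian) (ht : h.trace = 0) (n : ℕ) :
    ((𝓜 ^ n) h).IsHermitian ∧ ((𝓜 ^ n) h).trace = 0 ∧
      traceNorm ((𝓜 ^ n) h) ≤ (1 - (κ.trace).re) ^ n * traceNorm h := by
  induction n with
  | zero => simpa using ⟨hh, ht⟩
  | succ n ih =>
    obtain ⟨ih1, ih2, ih3⟩ := ih
    rw [pow_apply_succ]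
    refine ⟨map_herm hCP ih1, by rw [hTP]; exact ih2, ?_⟩
    calc traceNorm (𝓜 ((𝓜 ^ n) h)) ≤ (1 - (κ.trace).re) * traceNorm ((𝓜 ^ n) h) :=
          contraction hκ hTP hdom ih1 ih2
      _ ≤ (1 - (κ.trace).re) * ((1 - (κ.trace).re) ^ n * traceNorm h) := by
          exact mul_le_mul_of_nonneg_left ih3 hc0
      _ = (1 - (κ.trace).re) ^ (n + 1) * traceNorm h := by ring

lemma density_iter (hCP : IsCompletelyPositive 𝓜) (hTP : IsTracePreserving 𝓜)
    {ρ : Matrix (Fin d) (Fin d) ℂ} (hρ : IsDensity ρ) (n : ℕ) :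
    IsDensity ((𝓜 ^ n) ρ) := by
  induction n with
  | zero => simpa using hρ
  | succ n ih =>
    rw [pow_apply_succ]
    exact ⟨cp_psd hCP ih.1, by rw [hTP]; exact ih.2⟩

lemma density_diff {ρ σ : Matrix (Fin d) (Fin d) ℂ} (hρ : IsDensity ρ) (hσ : IsDensity σ) :
    (ρ - σ).IsHermitian ∧ (ρ - σ).trace = 0 ∧ traceNorm (ρ - σ) ≤ 2 := by
  refine ⟨hρ.1.1.sub hσ.1.1, by rw [Matrix.trace_sub, hρ.2, hσ.2]; ring, ?_⟩
  have := traceNorm_sub_le hρ.1 hσ.1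
  rw [hρ.2, hσ.2] at this
  norm_num at this
  linarith

lemma trace_tendsto {f : ℕ → Matrix (Fin d) (Fin d) ℂ} {A : Matrix (Fin d) (Fin d) ℂ}
    (hf : ∀ i j, Filter.Tendsto (fun n => f n i j) Filter.atTop (nhds (A i j))) :
    Filter.Tendsto (fun n => (f n).trace) Filter.atTop (nhds A.trace) := by
  have : ∀ n, (f n).trace = ∑ i, f n i i := fun n => rfl
  simp only [this, Matrix.trace, Matrix.diag]
  exact tendsto_finset_sum _ fun i _ => hf i i

lemma quadform_tendsto {f : ℕ → Matrix (Fin d) (Fin d) ℂ} {A : Matrix (Fin d) (Fin d) ℂ}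
    (hf : ∀ i j, Filter.Tendsto (fun n => f n i j) Filter.atTop (nhds (A i j)))
    (x : Fin d → ℂ) :
    Filter.Tendsto (fun n => star x ⬝ᵥ (f n) *ᵥ x) Filter.atTop (nhds (star x ⬝ᵥ A *ᵥ x)) := by
  simp only [dotProduct, Matrix.mulVec]
  refine tendsto_finset_sum _ fun i _ => ?_
  exact (tendsto_finset_sum _ fun j _ => (hf i j).mul_const (x j)).const_mul _

lemma psd_of_tendsto {f : ℕ → Matrix (Fin d) (Fin d) ℂ} {A : Matrix (Fin d) (Fin d) ℂ}
    (hf : ∀ i j, Filter.Tendsto (fun n => f n i j) Filter.atTop (nhds (A i j)))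
    (hpsd : ∀ n, (f n).PosSemidef) : A.PosSemidef := by
  refine Matrix.PosSemidef.of_dotProduct_mulVec_nonneg ?_ ?_
  · ext i j
    rw [Matrix.conjTranspose_apply]
    have h1 : Filter.Tendsto (fun n => star (f n j i)) Filter.atTop (nhds (star (A j i))) :=
      (continuous_star.tendsto _).comp (hf j i)
    have h2 : (fun n => star (f n j i)) = fun n => f n i j := by
      funext n
      rw [← Matrix.conjTranspose_apply, (hpsd n).1.eq]
    rw [h2] at h1
    exact tendsto_nhds_unique h1 (hf i j)
  · intro x
    have h1 := quadform_tendsto hf x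
    have hre : Filter.Tendsto (fun n => (star x ⬝ᵥ (f n) *ᵥ x).re) Filter.atTop
        (nhds ((star x ⬝ᵥ A *ᵥ x).re)) := (Complex.continuous_re.tendsto _).comp h1
    have him : Filter.Tendsto (fun n => (star x ⬝ᵥ (f n) *ᵥ x).im) Filter.atTop
        (nhds ((star x ⬝ᵥ A *ᵥ x).im)) := (Complex.continuous_im.tendsto _).comp h1
    have hre0 : 0 ≤ (star x ⬝ᵥ A *ᵥ x).re := by
      refine ge_of_tendsto' hre fun n => ?_
      exact ((hpsd n).re_dotProduct_nonneg x)
    have him0 : (star x ⬝ᵥ A *ᵥ x).im = 0 := by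
      have : ∀ n, (star x ⬝ᵥ (f n) *ᵥ x).im = 0 := by
        intro n
        have := (hpsd n).dotProduct_mulVec_nonneg x
        rw [Complex.le_def] at this
        exact this.2.symm
      simp only [this] at him
      exact tendsto_nhds_unique him tendsto_const_nhds
    rw [Complex.le_def]
    simpa using ⟨hre0, him0.symm⟩


/-- existence and uniqueness of the fixed density, with exponentially
fast convergence of the iterates of the channel towards it. -/
theorem stmt5 {d : ℕ} (𝓜 : Matrix (Fin d) (Fin d) ℂ →ₗ[ℂ] Matrix (Fin d) (Fin d) ℂ)
    (hCP : IsCompletelyPositive 𝓜) (hTP : IsTracePreserving 𝓜)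
    (κ : Matrix (Fin d) (Fin d) ℂ) (hκ : κ.PosSemidef)
    (hdom : ∀ ξ : Fin d → ℂ, star ξ ⬝ᵥ ξ = 1 → (𝓜 (proj ξ) - κ).PosSemidef)
    (hpos : 0 < (κ.trace).re) :
    ∃ ρstar : Matrix (Fin d) (Fin d) ℂ, IsDensity ρstar ∧ 𝓜 ρstar = ρstar ∧
      (∀ σ, IsDensity σ → 𝓜 σ = σ → σ = ρstar) ∧
      (∀ ρ, IsDensity ρ →
        Filter.Tendsto (fun n => (𝓜 ^ n) ρ) Filter.atTop (nhds ρstar) ∧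
        ∀ n : ℕ, traceNorm ((𝓜 ^ n) ρ - ρstar) ≤ 2 * (1 - (κ.trace).re) ^ n) := by
  rcases Nat.eq_zero_or_pos d with hd0 | hd
  · exfalso
    have h0 : κ.trace = 0 := by
      subst hd0
      rw [Matrix.trace]
      simp
    rw [h0] at hpos
    simp at hpos
  have hc1 : (1 - (κ.trace).re) < 1 := by linarith
  -- a unit vector and `Tr κ ≤ 1`
  have hξdot : star (Pi.single (⟨0, hd⟩ : Fin d) (1 : ℂ)) ⬝ᵥ Pi.single (⟨0, hd⟩ : Fin d) 1
      = 1 := by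
    simp [dotProduct, Pi.single_apply, apply_ite, Finset.sum_ite_eq']
  have hprojtr : (proj (Pi.single (⟨0, hd⟩ : Fin d) (1 : ℂ))).trace = 1 := by
    simp [proj, Matrix.trace, Matrix.diag, Matrix.vecMulVec_apply, Pi.single_apply,
      apply_ite, Finset.sum_ite_eq']
  have hc0 : 0 ≤ (1 - (κ.trace).re) := by
    have hP := psd_trace_re_nonneg (hdom _ hξdot)
    rw [Matrix.trace_sub, hTP, hprojtr] at hP
    rw [Complex.sub_re, Complex.one_re] at hP
    linarith
  -- initial density
  set P0 : Matrix (Fin d) (Fin d) ℂ := (((d : ℝ)⁻¹ : ℝ) : ℂ) • (1 : Matrix (Fin d) (Fin d) ℂ)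
    with hP0def
  have hdR : ((d : ℝ)) ≠ 0 := Nat.cast_ne_zero.mpr hd.ne'
  have hρ₀ : IsDensity P0 := by
    constructor
    · exact psd_smul_real Matrix.PosSemidef.one (by positivity)
    · rw [hP0def, Matrix.trace_smul, Matrix.trace_one, smul_eq_mul]
      have hcast : (((d : ℝ)⁻¹ : ℝ) : ℂ) = ((d : ℂ))⁻¹ := by push_cast; ring
      rw [hcast, Fintype.card_fin]
      exact inv_mul_cancel₀ (by exact_mod_cast hdR)
  set f : ℕ → Matrix (Fin d) (Fin d) ℂ := fun n => (𝓜 ^ n) P0 with hfdef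
  have hfd : ∀ n, IsDensity (f n) := fun n => density_iter hCP hTP hρ₀ n
  have hMP0 : IsDensity (𝓜 P0) := by
    have := density_iter hCP hTP hρ₀ 1
    rwa [pow_one] at this
  obtain ⟨hδh, hδt, hδn⟩ := density_diff hMP0 hρ₀
  have hstep : ∀ n, f (n + 1) - f n = (𝓜 ^ n) (𝓜 P0 - P0) := by
    intro n
    have he : f (n + 1) = (𝓜 ^ n) (𝓜 P0) := by
      show (𝓜 ^ (n + 1)) P0 = (𝓜 ^ n) (𝓜 P0)
      rw [pow_succ]
      rfl
    rw [map_sub, he]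
  have hstepb : ∀ n, traceNorm (f (n + 1) - f n) ≤ 2 * (1 - (κ.trace).re) ^ n := by
    intro n
    rw [hstep n]
    have h1 := (iter_herm_bound hκ hCP hTP hdom hc0 hδh hδt n).2.2
    have h2 : (1 - (κ.trace).re) ^ n * traceNorm (𝓜 P0 - P0)
        ≤ (1 - (κ.trace).re) ^ n * 2 := by
      exact mul_le_mul_of_nonneg_left hδn (pow_nonneg hc0 n)
    calc traceNorm ((𝓜 ^ n) (𝓜 P0 - P0)) ≤ (1 - (κ.trace).re) ^ n * traceNorm (𝓜 P0 - P0) := h1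
      _ ≤ (1 - (κ.trace).re) ^ n * 2 := h2
      _ = 2 * (1 - (κ.trace).re) ^ n := by ring
  have hent : ∀ i j n, dist (f n i j) (f (n + 1) i j) ≤ 2 * (1 - (κ.trace).re) ^ n := by
    intro i j n
    rw [Complex.dist_eq]
    have : f n i j - f (n + 1) i j = -((f (n + 1) - f n) i j) := by
      simp [Matrix.sub_apply]
    rw [this, norm_neg]
    have hherm : (f (n + 1) - f n).IsHermitian := by
      rw [hstep n]
      exact (iter_herm_bound hκ hCP hTP hdom hc0 hδh hδt n).1
    exact (entry_le_traceNorm hherm i j).trans (hstepb n)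
  have hcs : ∀ i j, CauchySeq fun n => f n i j := fun i j =>
    cauchySeq_of_le_geometric _ 2 hc1 (hent i j)
  set ρstar : Matrix (Fin d) (Fin d) ℂ :=
    Matrix.of fun i j => limUnder Filter.atTop fun n => f n i j with hρstardef
  have hlim : ∀ i j, Filter.Tendsto (fun n => f n i j) Filter.atTop (nhds (ρstar i j)) := by
    intro i j
    rw [hρstardef]
    exact (hcs i j).tendsto_limUnder
  have hρstar_psd : ρstar.PosSemidef := psd_of_tendsto hlim fun n => (hfd n).1
  have hρstar_tr : ρstar.trace = 1 := by
    have h1 := trace_tendsto hlim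
    have h2 : (fun n => (f n).trace) = fun _ => (1 : ℂ) := funext fun n => (hfd n).2
    rw [h2] at h1
    exact tendsto_nhds_unique h1 tendsto_const_nhds
  have htendsM : Filter.Tendsto f Filter.atTop (nhds ρstar) := by
    refine tendsto_pi_nhds.mpr ?_
    intro i
    rw [tendsto_pi_nhds]
    exact fun j => hlim i j
  have hfix : 𝓜 ρstar = ρstar := by
    have h1 : Filter.Tendsto (fun n => 𝓜 (f n)) Filter.atTop (nhds (𝓜 ρstar)) :=
      (𝓜.continuous_of_finiteDimensional.tendsto ρstar).comp htendsM
    have h2 : (fun n => 𝓜 (f n)) = fun n => f (n + 1) :=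
      funext fun n => (pow_apply_succ n P0).symm
    rw [h2] at h1
    have h3 : Filter.Tendsto (fun n => f (n + 1)) Filter.atTop (nhds ρstar) :=
      htendsM.comp (Filter.tendsto_add_atTop_nat 1)
    exact tendsto_nhds_unique h1 h3
  have hfixn : ∀ n, (𝓜 ^ n) ρstar = ρstar := by
    intro n
    induction n with
    | zero => simp
    | succ n ih => rw [pow_apply_succ, ih, hfix]
  have hρstar_dens : IsDensity ρstar := ⟨hρstar_psd, hρstar_tr⟩
  have hbnd : ∀ ρ, IsDensity ρ → ∀ n, ((𝓜 ^ n) ρ - ρstar).IsHermitian ∧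
      traceNorm ((𝓜 ^ n) ρ - ρstar) ≤ 2 * (1 - (κ.trace).re) ^ n := by
    intro ρ hρ n
    obtain ⟨hh, ht, hn⟩ := density_diff hρ hρstar_dens
    have heq : (𝓜 ^ n) ρ - ρstar = (𝓜 ^ n) (ρ - ρstar) := by
      rw [map_sub, hfixn n]
    obtain ⟨ih1, _, ih3⟩ := iter_herm_bound hκ hCP hTP hdom hc0 hh ht n
    rw [heq]
    refine ⟨ih1, ih3.trans ?_⟩
    calc (1 - (κ.trace).re) ^ n * traceNorm (ρ - ρstar)
        ≤ (1 - (κ.trace).re) ^ n * 2 := mul_le_mul_of_nonneg_left hn (pow_nonneg hc0 n)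
      _ = 2 * (1 - (κ.trace).re) ^ n := by ring
  refine ⟨ρstar, hρstar_dens, hfix, ?_, ?_⟩
  · -- uniqueness
    intro σ hσ hfixσ
    obtain ⟨hh, ht, _⟩ := density_diff hσ hρstar_dens
    have hcontr := contraction hκ hTP hdom hh ht
    have hfixδ : 𝓜 (σ - ρstar) = σ - ρstar := by rw [map_sub, hfixσ, hfix]
    rw [hfixδ] at hcontr
    have hTnn := traceNorm_nonneg hh
    have hT0 : traceNorm (σ - ρstar) = 0 := by nlinarith
    exact sub_eq_zero.mp (traceNorm_eq_zero hh hT0)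
  · -- convergence
    intro ρ hρ
    refine ⟨?_, fun n => (hbnd ρ hρ n).2⟩
    refine tendsto_pi_nhds.mpr ?_
    intro i
    rw [tendsto_pi_nhds]
    intro j
    rw [tendsto_iff_dist_tendsto_zero]
    have hb : ∀ n, dist ((𝓜 ^ n) ρ i j) (ρstar i j) ≤ 2 * (1 - (κ.trace).re) ^ n := by
      intro n
      rw [Complex.dist_eq]
      have : (𝓜 ^ n) ρ i j - ρstar i j = ((𝓜 ^ n) ρ - ρstar) i j := by
        simp [Matrix.sub_apply]
      rw [this]
      exact (entry_le_traceNorm (hbnd ρ hρ n).1 i j).trans (hbnd ρ hρ n).2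
    have hg : Filter.Tendsto (fun n : ℕ => 2 * (1 - (κ.trace).re) ^ n) Filter.atTop
        (nhds 0) := by
      have := (tendsto_pow_atTop_nhds_zero_of_lt_one hc0 hc1).const_mul (2 : ℝ)
      simpa using this
    exact squeeze_zero (fun n => dist_nonneg) hb hg
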